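/- arXiv:1203.4164 — 2 statements merged into one kernel-verified Lean document; each statement's English description precedes it below -/
import Mathlib

section
/- In the general (signed) case, τ(A_{ij}) = (ω^{-i(1+j)}/N) Σ_{k,l∈ℤ_N} θ_k θ_{k+j} ω^{-k(i+l)} A_{lj}, where τ(E_{ij}) = θ_i θ_j E_{N-1-j,N-1-i} and it is assumed θ_{N-1-k} θ_{N-1-k-j} = θ_k θ_{k+j} for all k,j. -/
/-!
Discrete Fourier inversion in the first index, `E_{k,k+j} = N⁻¹ Σ_l ω^{-kl} A_{lj}`, turns the
right-hand side into `ω^{-i(1+j)} Σ_k θ_k θ_{k+j} ω^{-ki} E_{k,k+j}`. On the other side `τ` sends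
the diagonal `{(k, k+j)}` to itself via `k ↦ -1-k-j`, so both sides are supported on the same
diagonal, and there they agree by the symmetry of `θ` and `ω^{(-1-k-j)i} = ω^{-i(1+j)} ω^{-ki}`.
-/

open Matrix BigOperators

/-- `ω = exp(2πi/N)`, a primitive N-th root of unity. -/
noncomputable def omegaN (N : ℕ) : ℂ := Complex.exp (2 * Real.pi * Complex.I / N)

/-- `ω^m` for `m ∈ ℤ/N` (well defined since `ω^N = 1`). -/
noncomputable def wpow (N : ℕ) (m : ZMod N) : ℂ := omegaN N ^ m.val

/-- Matrix unit `E_{a b}` in `Mat_N(ℂ)` with indices in `ℤ/N`. -/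
def EU (N : ℕ) [NeZero N] (a b : ZMod N) : Matrix (ZMod N) (ZMod N) ℂ :=
  Matrix.single a b 1

/-- Principal basis element `A_{i j} = Σ_k ω^{k i} E_{k, k+j}`. -/
noncomputable def Apr (N : ℕ) [NeZero N] (i j : ZMod N) : Matrix (ZMod N) (ZMod N) ℂ :=
  ∑ k : ZMod N, wpow N (k * i) • EU N k (k + j)

/-- The signed transposition `τ(E_{ij}) = θ_i θ_j E_{N-1-j, N-1-i}` (indices mod `N`). -/
def tauM (N : ℕ) (θ : ZMod N → ℂ) (X : Matrix (ZMod N) (ZMod N) ℂ) :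
    Matrix (ZMod N) (ZMod N) ℂ :=
  Matrix.of fun a b => θ (-1 - b) * θ (-1 - a) * X (-1 - b) (-1 - a)

section RootOfUnity

variable (N : ℕ) [NeZero N]

lemma isPrimitiveRoot_omegaN : IsPrimitiveRoot (omegaN N) N :=
  Complex.isPrimitiveRoot_exp N (NeZero.ne N)

lemma wpow_natCast (m : ℕ) : wpow N (m : ZMod N) = omegaN N ^ m := by
  rw [wpow, ZMod.val_natCast]
  conv_rhs => rw [← Nat.mod_add_div m N, pow_add, pow_mul, (isPrimitiveRoot_omegaN N).pow_eq_one,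
    one_pow, mul_one]

lemma wpow_add (x y : ZMod N) : wpow N (x + y) = wpow N x * wpow N y := by
  rw [← ZMod.natCast_zmod_val x, ← ZMod.natCast_zmod_val y, ← Nat.cast_add, wpow_natCast,
    wpow_natCast, wpow_natCast, pow_add]

lemma wpow_mul_val (l c : ZMod N) : wpow N (l * c) = (wpow N c) ^ l.val := by
  rw [← ZMod.natCast_zmod_val l, ← ZMod.natCast_zmod_val c, ← Nat.cast_mul, wpow_natCast,
    wpow_natCast, ZMod.natCast_zmod_val, ← pow_mul, mul_comm]

lemma wpow_ne_one {c : ZMod N} (hc : c ≠ 0) : wpow N c ≠ 1 := by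
  rw [wpow, Ne, (isPrimitiveRoot_omegaN N).pow_eq_one_iff_dvd]
  exact fun hdvd => hc <| (ZMod.val_eq_zero c).mp <|
    Nat.eq_zero_of_dvd_of_lt hdvd (ZMod.val_lt c)

lemma sum_wpow_mul (c : ZMod N) :
    ∑ l : ZMod N, wpow N (l * c) = if c = 0 then (N : ℂ) else 0 := by
  simp only [wpow_mul_val]
  have hval : Function.Bijective fun l : ZMod N => (⟨l.val, l.val_lt⟩ : Fin N) :=
    (Fintype.bijective_iff_injective_and_card _).mpr
      ⟨fun _ _ h => ZMod.val_injective N (Fin.mk.inj h), by simp [ZMod.card]⟩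
  rw [Fintype.sum_bijective _ hval _ (fun m : Fin N => wpow N c ^ (m : ℕ)) (fun _ => rfl),
    Fin.sum_univ_eq_sum_range (fun m => wpow N c ^ m)]
  split_ifs with hc
  · simp [hc, wpow]
  · rw [geom_sum_eq (wpow_ne_one N hc), wpow, ← pow_mul, mul_comm, pow_mul,
      (isPrimitiveRoot_omegaN N).pow_eq_one, one_pow, sub_self, zero_div]

end RootOfUnity

section PrincipalBasis

variable {N : ℕ} [NeZero N]

lemma sum_smul_EU_diag_apply (c : ZMod N → ℂ) (j a b : ZMod N) :
    (∑ k : ZMod N, c k • EU N k (k + j)) a b = if b = a + j then c a else 0 := by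
  simp only [EU, Matrix.sum_apply, Matrix.smul_apply, Matrix.single_apply, smul_eq_mul,
    mul_ite, mul_one, mul_zero]
  rw [Finset.sum_eq_single a (fun k _ hk => if_neg fun h => hk h.1) (by simp)]
  simp only [true_and, eq_comm]

lemma Apr_apply (i j a b : ZMod N) :
    Apr N i j a b = if b = a + j then wpow N (a * i) else 0 :=
  sum_smul_EU_diag_apply _ j a b

lemma tauM_Apr_apply (θ : ZMod N → ℂ) (i j a b : ZMod N) :
    tauM N θ (Apr N i j) a b =
      if b = a + j then θ (-1 - a - j) * θ (-1 - a) * wpow N ((-1 - a - j) * i) else 0 := by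
  rw [tauM, of_apply, Apr_apply]
  by_cases hb : b = a + j
  · subst hb
    rw [if_pos (by ring), if_pos rfl, sub_add_eq_sub_sub]
  · rw [if_neg (fun h => hb (by linear_combination h)), if_neg hb, mul_zero]

lemma sum_wpow_smul_Apr (k j : ZMod N) :
    ∑ l : ZMod N, wpow N (-(k * l)) • Apr N l j = (N : ℂ) • EU N k (k + j) := by
  ext a b
  simp only [Matrix.sum_apply, Matrix.smul_apply, Apr_apply, EU, Matrix.single_apply,
    smul_eq_mul]
  by_cases hb : b = a + j
  · have hterm : ∀ l : ZMod N, wpow N (-(k * l)) * wpow N (a * l) = wpow N (l * (a - k)) :=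
      fun l => by rw [← wpow_add]; ring_nf
    simp only [if_pos hb, hterm, sum_wpow_mul, sub_eq_zero]
    by_cases ha : a = k
    · simp [ha, hb]
    · simp [ha, Ne.symm ha]
  · simp only [if_neg hb, mul_zero, Finset.sum_const_zero]
    rw [if_neg (fun h => hb (by rw [← h.1, ← h.2])), mul_zero]

end PrincipalBasis

theorem tau_principal_signed_general (N : ℕ) [NeZero N] (θ : ZMod N → ℂ)
    (hsym : ∀ k j : ZMod N, θ (-1 - k) * θ (-1 - k - j) = θ k * θ (k + j))
    (i j : ZMod N) :
    tauM N θ (Apr N i j) =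
      (wpow N (-(i * (1 + j))) / N) •
        ∑ k : ZMod N, ∑ l : ZMod N,
          (θ k * θ (k + j) * wpow N (-(k * (i + l)))) • Apr N l j := by
  have hN : (N : ℂ) ≠ 0 := Nat.cast_ne_zero.mpr (NeZero.ne N)
  have hinner : ∀ k : ZMod N, ∑ l : ZMod N, (θ k * θ (k + j) * wpow N (-(k * (i + l)))) •
      Apr N l j = (N * (θ k * θ (k + j) * wpow N (-(k * i)))) • EU N k (k + j) := fun k => by
    simp only [neg_add, mul_add, wpow_add, ← smul_smul, ← Finset.smul_sum, sum_wpow_smul_Apr]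
    simp only [smul_smul]
    ring_nf
  ext a b
  simp only [Finset.sum_congr rfl fun k _ => hinner k, Matrix.smul_apply, tauM_Apr_apply,
    sum_smul_EU_diag_apply, smul_eq_mul, mul_ite, mul_zero]
  refine if_congr Iff.rfl ?_ rfl
  rw [mul_comm (θ _), hsym, show (-1 - a - j) * i = -(i * (1 + j)) + -(a * i) by ring, wpow_add]
  field_simp

/-- In the general signed case,
`τ(A_{ij}) = (ω^{-i(1+j)}/N) Σ_{k,l} θ_k θ_{k+j} ω^{-k(i+l)} A_{lj}`,
assuming `θ_{N-1-k} θ_{N-1-k-j} = θ_k θ_{k+j}`. -/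
theorem tau_principal_signed (N : ℕ) [NeZero N] (θ : ZMod N → ℂ)
    (hθ : ∀ i, θ i = 1 ∨ θ i = -1)
    (hsym : ∀ k j : ZMod N, θ (-1 - k) * θ (-1 - k - j) = θ k * θ (k + j))
    (i j : ZMod N) :
    tauM N θ (Apr N i j) =
      (wpow N (-(i * (1 + j))) / N) •
        ∑ k : ZMod N, ∑ l : ZMod N,
          (θ k * θ (k + j) * wpow N (-(k * (i + l)))) • Apr N l j :=
  tau_principal_signed_general N θ hsym i j
end

section
/- Let U be an associative ℂ-algebra with elements t_{ij}(u) = δ_{ij} + Σ_{r≥1} t_{ij}^{(r)} u^{-r} (i,j ∈ ℤ_N) satisfying the Yangian relations (u-v)[t_{ij}(u), t_{kl}(v)] = t_{kj}(u)t_{il}(v) - t_{kj}(v)t_{il}(u). Define x_{ij}(u) = (1/N) Σ_{k∈ℤ_N} ω^{-ki} t_{k,k+j}(u). Then (u-v)[x_{ij}(u), x_{kl}(v)] = (1/N) Σ_{a,b∈ℤ_N} ω^{-ab} ( x_{k+a,j+b}(u) x_{i-a,l-b}(v) - x_{k+a,j+b}(v) x_{i-a,l-b}(u) ). -/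
open BigOperators

/-!
Substituting the definition of `x`, both sides become double sums over `p q` of products
`t_{p,·}(u) t_{q,·}(v)` weighted by characters. On the left, the Yangian relation swaps the row
indices `p, q` of each commutator. On the right, the sum of `ω^{-ab}` over `a` is a character sum
that vanishes unless `b = q - p`, and what survives is exactly the row-swapped sum.
Here `wpow N` is the primitive character `ZMod.stdAddChar`, and only character orthogonality
enters, so the computation works over any finite commutative ring with a primitive additive
character.
-/

open Finset

lemma wpow_eq_stdAddChar (N : ℕ) [NeZero N] (m : ZMod N) : wpow N m = ZMod.stdAddChar m := by
  rw [wpow, omegaN, ← Complex.exp_nat_mul, ZMod.stdAddChar_apply, ZMod.toCircle_apply]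
  ring_nf

section PrincipalTransform

variable {R : Type*} [CommRing R] [Fintype R] (ψ : AddChar R ℂ)
  {M : Type*} [AddCommGroup M] [Module ℂ M]

noncomputable def principalSeries (t : R → R → M) (i j : R) : M :=
  (Fintype.card R : ℂ)⁻¹ • ∑ k, ψ (-(k * i)) • t k (k + j)

noncomputable def principalTransform (F : R → R → R → R → M) (i j k l : R) : M :=
  ((Fintype.card R : ℂ)⁻¹ * (Fintype.card R : ℂ)⁻¹) •
    ∑ p, ∑ q, (ψ (-(p * i)) * ψ (-(q * k))) • F p (p + j) q (q + l)

lemma principalTransform_sub (F G : R → R → R → R → M) (i j k l : R) :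
    principalTransform ψ (F - G) i j k l =
      principalTransform ψ F i j k l - principalTransform ψ G i j k l := by
  simp only [principalTransform, Pi.sub_apply, smul_sub, sum_sub_distrib]

lemma principalTransform_swap_factors (F : R → R → R → R → M) (i j k l : R) :
    principalTransform ψ (fun p j q l => F q l p j) i j k l = principalTransform ψ F k l i j := by
  simp only [principalTransform]
  rw [sum_comm]
  simp only [mul_comm (ψ (-(_ * i)))]

lemma principalSeries_mul_principalSeries {U : Type*} [Ring U] [Algebra ℂ U] (f g : R → R → U)
    (i j k l : R) :
    principalSeries ψ f i j * principalSeries ψ g k l =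
      principalTransform ψ (fun p j q l => f p j * g q l) i j k l := by
  simp only [principalSeries, principalTransform, smul_mul_smul_comm, sum_mul_sum]

lemma mul_principalTransform {U : Type*} [Ring U] [Algebra ℂ U] (c : U)
    (F : R → R → R → R → U) (i j k l : R) :
    c * principalTransform ψ F i j k l =
      principalTransform ψ (fun p j q l => c * F p j q l) i j k l := by
  simp only [principalTransform, mul_smul_comm, mul_sum]

lemma mul_commutator_principalSeries {U : Type*} [Ring U] [Algebra ℂ U] (c : U)
    (f g : R → R → U) (i j k l : R) :
    c * (principalSeries ψ f i j * principalSeries ψ g k l -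
        principalSeries ψ g k l * principalSeries ψ f i j) =
      principalTransform ψ (fun p j q l => c * (f p j * g q l - g q l * f p j)) i j k l := by
  rw [principalSeries_mul_principalSeries, principalSeries_mul_principalSeries,
    ← principalTransform_swap_factors ψ _ i j k l, ← principalTransform_sub,
    mul_principalTransform]
  rfl

variable [DecidableEq R]

lemma sum_addChar_mul_shift_eq_ite (hψ : ψ.IsPrimitive) (b i k p q : R) :
    ∑ a, ψ (-(a * b)) * (ψ (-(p * (k + a))) * ψ (-(q * (i - a)))) =
      if b = q - p then Fintype.card R * (ψ (-(p * k)) * ψ (-(q * i))) else 0 := by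
  have h (a : R) : ψ (-(a * b)) * (ψ (-(p * (k + a))) * ψ (-(q * (i - a)))) =
      ψ (-(p * k)) * ψ (-(q * i)) * ψ (a * (q - p - b)) := by
    simp only [← AddChar.map_add_eq_mul]
    ring_nf
  simp only [h, ← mul_sum, AddChar.sum_mulShift _ hψ, sub_eq_zero, eq_comm (a := q - p)]
  split_ifs <;> ring

lemma sum_addChar_smul_principalTransform (hψ : ψ.IsPrimitive) (F : R → R → R → R → M)
    (b i j k l : R) :
    ∑ a, ψ (-(a * b)) • principalTransform ψ F (k + a) (j + b) (i - a) (l - b) =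
      ((Fintype.card R : ℂ)⁻¹ * (Fintype.card R : ℂ)⁻¹) • ∑ p, ∑ q,
        (if b = q - p then Fintype.card R * (ψ (-(p * k)) * ψ (-(q * i))) else 0) •
          F p (p + (j + b)) q (q + (l - b)) := by
  simp only [principalTransform, smul_sum, smul_smul]
  rw [sum_comm]
  refine sum_congr rfl fun p _ => ?_
  rw [sum_comm]
  refine sum_congr rfl fun q _ => ?_
  rw [← sum_smul, ← sum_addChar_mul_shift_eq_ite ψ hψ, mul_sum]
  exact congrArg (· • _) (sum_congr rfl fun a _ => by ring)

theorem principalTransform_swap_rows (hψ : ψ.IsPrimitive) (F : R → R → R → R → M)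
    (i j k l : R) :
    principalTransform ψ (fun p j q l => F q j p l) i j k l =
      (Fintype.card R : ℂ)⁻¹ • ∑ a, ∑ b,
        ψ (-(a * b)) • principalTransform ψ F (k + a) (j + b) (i - a) (l - b) := by
  have hn : (Fintype.card R : ℂ) ≠ 0 := Nat.cast_ne_zero.mpr Fintype.card_ne_zero
  conv_lhs => rw [principalTransform, sum_comm]
  conv_rhs =>
    rw [sum_comm]
    simp only [sum_addChar_smul_principalTransform ψ hψ, ← smul_sum, smul_smul]
    rw [sum_comm]
  simp only [ite_smul, zero_smul, smul_sum]
  refine sum_congr rfl fun p _ => ?_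
  rw [sum_comm]
  refine sum_congr rfl fun q _ => ?_
  have hj : p + (j + (q - p)) = q + j := by abel
  have hl : q + (l - (q - p)) = p + l := by abel
  rw [← smul_sum, sum_ite_eq', if_pos (mem_univ _), hj, hl, smul_smul, smul_smul]
  congr 1
  field_simp

end PrincipalTransform

/-- `t i j`, `tv i j`, `x i j`, `xv i j` stand for `t_{ij}(u)`, `t_{ij}(v)`, `x_{ij}(u)`,
`x_{ij}(v)`; the parameters `u`, `v` are taken to be elements of `U`. -/
theorem principal_yangian_relation (N : ℕ) [NeZero N]
    (U : Type*) [Ring U] [Algebra ℂ U] (u v : U)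
    (t tv : ZMod N → ZMod N → U)
    (hrel : ∀ i j k l : ZMod N,
      (u - v) * (t i j * tv k l - tv k l * t i j) =
        t k j * tv i l - tv k j * t i l)
    (x xv : ZMod N → ZMod N → U)
    (hx : ∀ i j : ZMod N, x i j = (N : ℂ)⁻¹ • ∑ k : ZMod N, wpow N (-(k * i)) • t k (k + j))
    (hxv : ∀ i j : ZMod N,
      xv i j = (N : ℂ)⁻¹ • ∑ k : ZMod N, wpow N (-(k * i)) • tv k (k + j)) :
    ∀ i j k l : ZMod N,
      (u - v) * (x i j * xv k l - xv k l * x i j) =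
        (N : ℂ)⁻¹ • ∑ a : ZMod N, ∑ b : ZMod N,
          wpow N (-(a * b)) •
            (x (k + a) (j + b) * xv (i - a) (l - b) -
              xv (k + a) (j + b) * x (i - a) (l - b)) := by
  intro i j k l
  set ψ : AddChar (ZMod N) ℂ := ZMod.stdAddChar
  have hψ : wpow N = ψ := funext (wpow_eq_stdAddChar N)
  have hN : (N : ℂ) = Fintype.card (ZMod N) := by rw [ZMod.card]
  obtain rfl : x = principalSeries ψ t := by ext i j; rw [hx, hψ, hN]; rfl
  obtain rfl : xv = principalSeries ψ tv := by ext i j; rw [hxv, hψ, hN]; rfl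
  rw [hψ, hN]
  calc _ = principalTransform ψ (fun p j q l => t q j * tv p l - tv q j * t p l) i j k l := by
        rw [mul_commutator_principalSeries]
        simp only [hrel]
    _ = _ := principalTransform_swap_rows ψ (ZMod.isPrimitive_stdAddChar N)
          (fun p j q l => t p j * tv q l - tv p j * t q l) i j k l
    _ = _ := by
        simp only [principalSeries_mul_principalSeries, ← principalTransform_sub]
        rfl
end
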